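/- The Pairing axiom holds in the implicative model: there exists t ∈ Σ with t ≤ ⋀_{α,β∈W} ⟆∃_{γ∈W}((α ∈_W γ) × (β ∈_W γ)). Concretely, taking γ := η_{α,β} the partial function with domain {α, β} and constant value ⊤, the term e(p(e(p ⊤ ρ))(e(p ⊤ ρ))) works. -/

import Mathlib

universe u v

/-- An implicative algebra: a complete lattice with an implication antitone in the
first argument, monotone in the second, distributing over arbitrary meets in the
second argument, together with a separator `Sep` which is upward closed, closed
under modus ponens, and contains the combinators K and S. -/
structure ImplicativeAlgebra (A : Type u) [CompleteLattice A] where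
  imp : A → A → A
  imp_anti : ∀ ⦃a a' b : A⦄, a ≤ a' → imp a' b ≤ imp a b
  imp_mono : ∀ ⦃a b b' : A⦄, b ≤ b' → imp a b ≤ imp a b'
  imp_sInf : ∀ (a : A) (S : Set A), imp a (sInf S) = ⨅ b ∈ S, imp a b
  Sep : Set A
  sep_upward : ∀ ⦃a b : A⦄, a ∈ Sep → a ≤ b → b ∈ Sep
  sep_mp : ∀ ⦃a b : A⦄, imp a b ∈ Sep → a ∈ Sep → b ∈ Sep
  sep_K : (⨅ a : A, ⨅ b : A, imp a (imp b a)) ∈ Sep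
  sep_S : (⨅ a : A, ⨅ b : A, ⨅ c : A,
      imp (imp a (imp b c)) (imp (imp a b) (imp a c))) ∈ Sep

namespace ImplicativeAlgebra

variable {A : Type u} [CompleteLattice A] (𝔸 : ImplicativeAlgebra A)

/-- Application: `a · b := ⋀ {x | a ≤ b → x}`. -/
def app (a b : A) : A := sInf {x : A | a ≤ 𝔸.imp b x}

/-- Implicative conjunction `a × b`. -/
def itimes (a b : A) : A := ⨅ x : A, 𝔸.imp (𝔸.imp a (𝔸.imp b x)) x

/-- Implicative disjunction `a + b`. -/
def iplus (a b : A) : A := ⨅ x : A, 𝔸.imp (𝔸.imp a x) (𝔸.imp (𝔸.imp b x) x)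

/-- Second-order encoding of the existential quantifier. -/
def iexists {ι : Sort v} (f : ι → A) : A := ⨅ x : A, 𝔸.imp (⨅ i, 𝔸.imp (f i) x) x

/-- Encoding of k = λx.λy.x. -/
def kComb : A := ⨅ a : A, 𝔸.imp a (⨅ b : A, 𝔸.imp b a)

/-- Encoding of λx.λy.y. -/
def kbarComb : A := ⨅ a : A, 𝔸.imp a (⨅ b : A, 𝔸.imp b b)

/-- Encoding of the pairing combinator p = λx.λy.λz.zxy. -/
def pComb : A := ⨅ a : A, 𝔸.imp a (⨅ b : A, 𝔸.imp b (⨅ c : A, 𝔸.imp c (𝔸.app (𝔸.app c a) b)))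

/-- Encoding of the first projection p₁ = λu.u k. -/
def p1Comb : A := ⨅ u : A, 𝔸.imp u (𝔸.app u 𝔸.kComb)

/-- Encoding of the second projection p₂ = λv.v k̄. -/
def p2Comb : A := ⨅ u : A, 𝔸.imp u (𝔸.app u 𝔸.kbarComb)

/-- Encoding of the existential-introduction combinator e = λx.λz.zx. -/
def eComb : A := ⨅ a : A, 𝔸.imp a (⨅ c : A, 𝔸.imp c (𝔸.app c a))

end ImplicativeAlgebra

/-- Names of the implicative model of set theory: a name is a (set-indexed)
family of previously constructed names, each labelled by a truth value in `A`
(a partial function from names to `A`, presented as a family). -/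
inductive Name (A : Type u) : Type (u + 1)
  | mk (ι : Type u) (elem : ι → Name A) (val : ι → A) : Name A

namespace Name

/-- The (index set of the) domain of a name. -/
def idx {A : Type u} : Name A → Type u
  | .mk ι _ _ => ι

/-- The elements of the domain of a name. -/
def elem {A : Type u} : (α : Name A) → α.idx → Name A
  | .mk _ e _ => e

/-- The truth value attached to each element of the domain of a name. -/
def val {A : Type u} : (α : Name A) → α.idx → A
  | .mk _ _ v => v

variable {A : Type u} [CompleteLattice A]

/-- `eqPair 𝔸 α β = (α ⊆_W β, β ⊆_W α)`, defined by simultaneous recursion,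
where `α ⊆_W β := ⋀_{t ∈ dom α}(α(t) → t ∈_W β)` and
`t ∈_W β := ∃_{u ∈ dom β}(β(u) × (u =_W t))` and `u =_W t := (u ⊆_W t) × (t ⊆_W u)`. -/
def eqPair (𝔸 : ImplicativeAlgebra A) : Name A → Name A → A × A
  | .mk _ e v, .mk _ e' v' =>
    (⨅ i, 𝔸.imp (v i) (𝔸.iexists fun j => 𝔸.itimes (v' j)
        (𝔸.itimes (eqPair 𝔸 (e i) (e' j)).2 (eqPair 𝔸 (e i) (e' j)).1)),
     ⨅ j, 𝔸.imp (v' j) (𝔸.iexists fun i => 𝔸.itimes (v i)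
        (𝔸.itimes (eqPair 𝔸 (e i) (e' j)).1 (eqPair 𝔸 (e i) (e' j)).2)))

/-- `α ⊆_W β`. -/
def subW (𝔸 : ImplicativeAlgebra A) (α β : Name A) : A := (eqPair 𝔸 α β).1

/-- `α =_W β := (α ⊆_W β) × (β ⊆_W α)`. -/
def eqW (𝔸 : ImplicativeAlgebra A) (α β : Name A) : A :=
  𝔸.itimes (eqPair 𝔸 α β).1 (eqPair 𝔸 α β).2

/-- `α ∈_W β := ∃_{t ∈ dom β}(β(t) × (t =_W α))`. -/
def memW (𝔸 : ImplicativeAlgebra A) (α β : Name A) : A :=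
  𝔸.iexists fun j : β.idx => 𝔸.itimes (β.val j) (eqW 𝔸 (β.elem j) α)

end Name

/-!
The combinators `e` and `p` lie above closed `S`/`K` terms (their bracket abstractions), hence in
`Σ`, and `Σ` is closed under application. For the pair name `γ = η_{α,β}`, `α` sits in the domain
of `γ` with value `⊤`; since `ρ` realizes `α =_W α`, `p ⊤ ρ` realizes `⊤ × (α =_W α)`, so
`e (p ⊤ ρ)` realizes `α ∈_W γ`, and likewise for `β`. Pairing the two and introducing the
existential at `γ` gives the claim.
-/

namespace ImplicativeAlgebra

variable {A : Type u} [CompleteLattice A] (𝔸 : ImplicativeAlgebra A)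

lemma imp_iInf {ι : Sort v} (a : A) (f : ι → A) : 𝔸.imp a (⨅ i, f i) = ⨅ i, 𝔸.imp a (f i) := by
  rw [← sInf_range, 𝔸.imp_sInf, iInf_range]

lemma le_imp_app (t b : A) : t ≤ 𝔸.imp b (𝔸.app t b) := by
  rw [app, imp_sInf]
  exact le_iInf₂ fun _ hx => hx

lemma app_le_iff {t b x : A} : 𝔸.app t b ≤ x ↔ t ≤ 𝔸.imp b x :=
  ⟨fun h => (𝔸.le_imp_app t b).trans (𝔸.imp_mono h), fun h => sInf_le h⟩

lemma app_mono {a a' b b' : A} (ha : a ≤ a') (hb : b ≤ b') : 𝔸.app a b ≤ 𝔸.app a' b' :=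
  𝔸.app_le_iff.2 (ha.trans ((𝔸.le_imp_app a' b').trans (𝔸.imp_anti hb)))

lemma app_mem_sep {a b : A} (ha : a ∈ 𝔸.Sep) (hb : b ∈ 𝔸.Sep) : 𝔸.app a b ∈ 𝔸.Sep :=
  𝔸.sep_mp (𝔸.sep_upward ha (𝔸.le_imp_app a b)) hb

lemma le_iInf_imp_of_app_le {t : A} {f : A → A} (h : ∀ a, 𝔸.app t a ≤ f a) :
    t ≤ ⨅ a, 𝔸.imp a (f a) :=
  le_iInf fun a => 𝔸.app_le_iff.1 (h a)

lemma top_mem_sep : (⊤ : A) ∈ 𝔸.Sep := 𝔸.sep_upward 𝔸.sep_K le_top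

lemma kComb_mem_sep : 𝔸.kComb ∈ 𝔸.Sep := by
  simpa only [kComb, imp_iInf] using 𝔸.sep_K

lemma app_app_kComb_le (a b : A) : 𝔸.app (𝔸.app 𝔸.kComb a) b ≤ a :=
  𝔸.app_le_iff.2 <| 𝔸.app_le_iff.2 <| (iInf_le _ a).trans (𝔸.imp_mono (iInf_le _ b))

def sComb : A := ⨅ a : A, ⨅ b : A, ⨅ c : A,
  𝔸.imp (𝔸.imp a (𝔸.imp b c)) (𝔸.imp (𝔸.imp a b) (𝔸.imp a c))

lemma sComb_mem_sep : 𝔸.sComb ∈ 𝔸.Sep := 𝔸.sep_S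

lemma app_app_app_sComb_le (f g x : A) :
    𝔸.app (𝔸.app (𝔸.app 𝔸.sComb f) g) x ≤ 𝔸.app (𝔸.app f x) (𝔸.app g x) := by
  set y := 𝔸.app g x
  set z := 𝔸.app (𝔸.app f x) y
  have hS : 𝔸.sComb ≤ 𝔸.imp (𝔸.imp x (𝔸.imp y z)) (𝔸.imp (𝔸.imp x y) (𝔸.imp x z)) :=
    (iInf_le _ x).trans ((iInf_le _ y).trans (iInf_le _ z))
  have hf : f ≤ 𝔸.imp x (𝔸.imp y z) := (𝔸.le_imp_app f x).trans (𝔸.imp_mono (𝔸.le_imp_app _ y))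
  refine 𝔸.app_le_iff.2 <| 𝔸.app_le_iff.2 <| 𝔸.app_le_iff.2 ?_
  exact (hS.trans (𝔸.imp_anti hf)).trans (𝔸.imp_mono (𝔸.imp_anti (𝔸.le_imp_app g x)))

def iComb : A := 𝔸.app (𝔸.app 𝔸.sComb 𝔸.kComb) 𝔸.kComb

lemma iComb_mem_sep : 𝔸.iComb ∈ 𝔸.Sep :=
  𝔸.app_mem_sep (𝔸.app_mem_sep 𝔸.sComb_mem_sep 𝔸.kComb_mem_sep) 𝔸.kComb_mem_sep

lemma app_iComb_le (x : A) : 𝔸.app 𝔸.iComb x ≤ x :=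
  (𝔸.app_app_app_sComb_le _ _ _).trans (𝔸.app_app_kComb_le _ _)

/-- Bracket abstraction of `λx.λz.z x`. -/
def eCombSK : A := 𝔸.app (𝔸.app 𝔸.sComb (𝔸.app 𝔸.kComb (𝔸.app 𝔸.sComb 𝔸.iComb))) 𝔸.kComb

lemma eCombSK_mem_sep : 𝔸.eCombSK ∈ 𝔸.Sep :=
  𝔸.app_mem_sep (𝔸.app_mem_sep 𝔸.sComb_mem_sep
    (𝔸.app_mem_sep 𝔸.kComb_mem_sep (𝔸.app_mem_sep 𝔸.sComb_mem_sep 𝔸.iComb_mem_sep)))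
    𝔸.kComb_mem_sep

lemma app_eCombSK_le (x : A) :
    𝔸.app 𝔸.eCombSK x ≤ 𝔸.app (𝔸.app 𝔸.sComb 𝔸.iComb) (𝔸.app 𝔸.kComb x) :=
  (𝔸.app_app_app_sComb_le _ _ _).trans (𝔸.app_mono (𝔸.app_app_kComb_le _ _) le_rfl)

lemma app_app_eCombSK_le (x z : A) : 𝔸.app (𝔸.app 𝔸.eCombSK x) z ≤ 𝔸.app z x :=
  calc 𝔸.app (𝔸.app 𝔸.eCombSK x) z
      ≤ 𝔸.app (𝔸.app (𝔸.app 𝔸.sComb 𝔸.iComb) (𝔸.app 𝔸.kComb x)) z :=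
        𝔸.app_mono (𝔸.app_eCombSK_le x) le_rfl
    _ ≤ 𝔸.app (𝔸.app 𝔸.iComb z) (𝔸.app (𝔸.app 𝔸.kComb x) z) := 𝔸.app_app_app_sComb_le _ _ _
    _ ≤ 𝔸.app z x := 𝔸.app_mono (𝔸.app_iComb_le z) (𝔸.app_app_kComb_le x z)

lemma eCombSK_le_eComb : 𝔸.eCombSK ≤ 𝔸.eComb :=
  𝔸.le_iInf_imp_of_app_le fun x => 𝔸.le_iInf_imp_of_app_le fun z => 𝔸.app_app_eCombSK_le x z

lemma eComb_mem_sep : 𝔸.eComb ∈ 𝔸.Sep := 𝔸.sep_upward 𝔸.eCombSK_mem_sep 𝔸.eCombSK_le_eComb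

/-- Bracket abstraction of `λx.λy.λz.z x y`; the `λz.z x` inside it is `eCombSK · x`. -/
def pCombSK : A :=
  𝔸.app (𝔸.app 𝔸.sComb (𝔸.app (𝔸.app 𝔸.sComb (𝔸.app 𝔸.kComb 𝔸.sComb))
      (𝔸.app (𝔸.app 𝔸.sComb (𝔸.app 𝔸.kComb 𝔸.kComb))
        (𝔸.app (𝔸.app 𝔸.sComb (𝔸.app 𝔸.kComb 𝔸.sComb)) 𝔸.eCombSK))))
    (𝔸.app 𝔸.kComb 𝔸.kComb)

lemma pCombSK_mem_sep : 𝔸.pCombSK ∈ 𝔸.Sep := by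
  have hK := 𝔸.kComb_mem_sep
  have hS := 𝔸.sComb_mem_sep
  exact 𝔸.app_mem_sep (𝔸.app_mem_sep hS (𝔸.app_mem_sep (𝔸.app_mem_sep hS (𝔸.app_mem_sep hK hS))
      (𝔸.app_mem_sep (𝔸.app_mem_sep hS (𝔸.app_mem_sep hK hK))
        (𝔸.app_mem_sep (𝔸.app_mem_sep hS (𝔸.app_mem_sep hK hS)) 𝔸.eCombSK_mem_sep))))
    (𝔸.app_mem_sep hK hK)

lemma app_pCombSK_le (x : A) :
    𝔸.app 𝔸.pCombSK x ≤
      𝔸.app (𝔸.app 𝔸.sComb (𝔸.app 𝔸.kComb (𝔸.app 𝔸.sComb (𝔸.app 𝔸.eCombSK x)))) 𝔸.kComb := by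
  refine (𝔸.app_app_app_sComb_le _ _ _).trans (𝔸.app_mono ?_ (𝔸.app_app_kComb_le _ _))
  refine (𝔸.app_app_app_sComb_le _ _ _).trans (𝔸.app_mono (𝔸.app_app_kComb_le _ _) ?_)
  refine (𝔸.app_app_app_sComb_le _ _ _).trans (𝔸.app_mono (𝔸.app_app_kComb_le _ _) ?_)
  exact (𝔸.app_app_app_sComb_le _ _ _).trans (𝔸.app_mono (𝔸.app_app_kComb_le _ _) le_rfl)

lemma app_app_pCombSK_le (x y : A) :
    𝔸.app (𝔸.app 𝔸.pCombSK x) y ≤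
      𝔸.app (𝔸.app 𝔸.sComb (𝔸.app 𝔸.eCombSK x)) (𝔸.app 𝔸.kComb y) :=
  ((𝔸.app_mono (𝔸.app_pCombSK_le x) le_rfl).trans (𝔸.app_app_app_sComb_le _ _ _)).trans
    (𝔸.app_mono (𝔸.app_app_kComb_le _ _) le_rfl)

lemma app_app_app_pCombSK_le (x y z : A) :
    𝔸.app (𝔸.app (𝔸.app 𝔸.pCombSK x) y) z ≤ 𝔸.app (𝔸.app z x) y :=
  ((𝔸.app_mono (𝔸.app_app_pCombSK_le x y) le_rfl).trans (𝔸.app_app_app_sComb_le _ _ _)).trans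
    (𝔸.app_mono (𝔸.app_app_eCombSK_le x z) (𝔸.app_app_kComb_le y z))

lemma pCombSK_le_pComb : 𝔸.pCombSK ≤ 𝔸.pComb :=
  𝔸.le_iInf_imp_of_app_le fun x => 𝔸.le_iInf_imp_of_app_le fun y =>
    𝔸.le_iInf_imp_of_app_le fun z => 𝔸.app_app_app_pCombSK_le x y z

lemma pComb_mem_sep : 𝔸.pComb ∈ 𝔸.Sep := 𝔸.sep_upward 𝔸.pCombSK_mem_sep 𝔸.pCombSK_le_pComb

lemma itimes_mono {a a' b b' : A} (ha : a ≤ a') (hb : b ≤ b') :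
    𝔸.itimes a b ≤ 𝔸.itimes a' b' :=
  iInf_mono fun _ => 𝔸.imp_anti ((𝔸.imp_anti ha).trans (𝔸.imp_mono (𝔸.imp_anti hb)))

lemma app_app_pComb_le_itimes (a b : A) : 𝔸.app (𝔸.app 𝔸.pComb a) b ≤ 𝔸.itimes a b := by
  refine 𝔸.app_le_iff.2 (𝔸.app_le_iff.2 ?_)
  refine (iInf_le _ a).trans ((𝔸.imp_mono (iInf_le _ b)).trans (𝔸.imp_mono (𝔸.imp_mono ?_)))
  refine le_iInf fun x => (iInf_le _ (𝔸.imp a (𝔸.imp b x))).trans (𝔸.imp_mono ?_)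
  exact 𝔸.app_le_iff.2 (𝔸.app_le_iff.2 le_rfl)

lemma app_eComb_le_iexists {ι : Sort v} {f : ι → A} (i : ι) {x : A} (h : x ≤ f i) :
    𝔸.app 𝔸.eComb x ≤ 𝔸.iexists f := by
  refine 𝔸.app_le_iff.2 ((iInf_le _ x).trans (𝔸.imp_mono ?_))
  refine le_iInf fun y => (iInf_le _ (⨅ i, 𝔸.imp (f i) y)).trans (𝔸.imp_mono ?_)
  exact 𝔸.app_le_iff.2 ((iInf_le _ i).trans (𝔸.imp_anti h))

end ImplicativeAlgebra

namespace Name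

variable {A : Type u} [CompleteLattice A] (𝔸 : ImplicativeAlgebra A)

lemma app_eComb_pair_le_memW_elem (γ : Name A) (j : γ.idx) {ρ : A}
    (hρ : ρ ≤ eqW 𝔸 (γ.elem j) (γ.elem j)) :
    𝔸.app 𝔸.eComb (𝔸.app (𝔸.app 𝔸.pComb (γ.val j)) ρ) ≤ memW 𝔸 (γ.elem j) γ :=
  𝔸.app_eComb_le_iexists j <|
    (𝔸.app_app_pComb_le_itimes _ _).trans (𝔸.itimes_mono le_rfl hρ)

def pair (α β : Name A) : Name A :=
  .mk (ULift Bool) (fun j => if j.down then α else β) fun _ => ⊤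

end Name

/-- the Pairing axiom holds in the implicative model: the term
e(p(e(p ⊤ ρ))(e(p ⊤ ρ))) belongs to Σ and realizes
⋀_{α,β∈W} ∃_{γ∈W}((α ∈_W γ) × (β ∈_W γ)). -/
theorem pairing_realized {A : Type u} [CompleteLattice A]
    (𝔸 : ImplicativeAlgebra A) (ρ : A) (hρSep : ρ ∈ 𝔸.Sep)
    (hρ : ρ ≤ ⨅ α : Name A, Name.eqW 𝔸 α α) :
    𝔸.app 𝔸.eComb
        (𝔸.app (𝔸.app 𝔸.pComb (𝔸.app 𝔸.eComb (𝔸.app (𝔸.app 𝔸.pComb ⊤) ρ)))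
          (𝔸.app 𝔸.eComb (𝔸.app (𝔸.app 𝔸.pComb ⊤) ρ))) ∈ 𝔸.Sep ∧
      𝔸.app 𝔸.eComb
          (𝔸.app (𝔸.app 𝔸.pComb (𝔸.app 𝔸.eComb (𝔸.app (𝔸.app 𝔸.pComb ⊤) ρ)))
            (𝔸.app 𝔸.eComb (𝔸.app (𝔸.app 𝔸.pComb ⊤) ρ))) ≤
        ⨅ α : Name A, ⨅ β : Name A,
          𝔸.iexists fun γ : Name A =>
            𝔸.itimes (Name.memW 𝔸 α γ) (Name.memW 𝔸 β γ) := by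
  set q := 𝔸.app 𝔸.eComb (𝔸.app (𝔸.app 𝔸.pComb ⊤) ρ)
  have hq : q ∈ 𝔸.Sep :=
    𝔸.app_mem_sep 𝔸.eComb_mem_sep
      (𝔸.app_mem_sep (𝔸.app_mem_sep 𝔸.pComb_mem_sep 𝔸.top_mem_sep) hρSep)
  refine ⟨𝔸.app_mem_sep 𝔸.eComb_mem_sep
    (𝔸.app_mem_sep (𝔸.app_mem_sep 𝔸.pComb_mem_sep hq) hq), le_iInf₂ fun α β => ?_⟩
  have hα : q ≤ Name.memW 𝔸 α (Name.pair α β) :=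
    Name.app_eComb_pair_le_memW_elem 𝔸 (Name.pair α β) ⟨true⟩ (hρ.trans (iInf_le _ α))
  have hβ : q ≤ Name.memW 𝔸 β (Name.pair α β) :=
    Name.app_eComb_pair_le_memW_elem 𝔸 (Name.pair α β) ⟨false⟩ (hρ.trans (iInf_le _ β))
  exact 𝔸.app_eComb_le_iexists (Name.pair α β) <|
    (𝔸.app_app_pComb_le_itimes q q).trans (𝔸.itimes_mono hα hβ)
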